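/- arXiv:0901.0234 — 7 statements merged into one kernel-verified Lean document; each statement's English description precedes it below -/
import Mathlib

section
/- Let v, w : [t_*, t^*] → ℝ be C¹ with v(t_*) = v(t^*) = v_0 and v(t) > v_0 for t ∈ (t_*, t^*). Let g, G : [v_0, ∞) → (0,∞) be continuous, and suppose g(v(t))·|v'(t)|/G(v(t)) ≤ w'(t) for all t ∈ (t_*, t^*). Define F(u) = ∫_{v_0}^{u} g(s)/G(s) ds and let F⁻¹ denote its inverse on its range. Then for every t ∈ [t_*, t^*], F(v(t)) ≤ (w(t^*) − w(t_*))/2; in particular, if (w(t^*) − w(t_*))/2 lies in the range of F, then v(t) ≤ F⁻¹((w(t^*) − w(t_*))/2). -/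
open Set MeasureTheory intervalIntegral

theorem stmt_3 (t₁ t₂ v₀ : ℝ) (ht : t₁ < t₂) (hv₀ : 0 < v₀)
    (v w v' w' : ℝ → ℝ)
    (hv : ∀ t ∈ Icc t₁ t₂, HasDerivAt v (v' t) t)
    (hw : ∀ t ∈ Icc t₁ t₂, HasDerivAt w (w' t) t)
    (hv'c : ContinuousOn v' (Icc t₁ t₂)) (hw'c : ContinuousOn w' (Icc t₁ t₂))
    (hvs : v t₁ = v₀) (hve : v t₂ = v₀)
    (hvgt : ∀ t ∈ Ioo t₁ t₂, v₀ < v t)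
    (g G : ℝ → ℝ)
    (hg : ContinuousOn g (Ici v₀)) (hG : ContinuousOn G (Ici v₀))
    (hgpos : ∀ u ∈ Ici v₀, 0 < g u) (hGpos : ∀ u ∈ Ici v₀, 0 < G u)
    (hineq : ∀ t ∈ Ioo t₁ t₂, g (v t) * |v' t| / G (v t) ≤ w' t)
    (F : ℝ → ℝ) (hF : ∀ u, F u = ∫ s in v₀..u, g s / G s) :
    ∀ t ∈ Icc t₁ t₂, F (v t) ≤ (w t₂ - w t₁) / 2 ∧
      ∀ u ∈ Ici v₀, F u = (w t₂ - w t₁) / 2 → v t ≤ u := by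
  have hvcont : ContinuousOn v (Icc t₁ t₂) := fun x hx =>
    (hv x hx).continuousAt.continuousWithinAt
  have hvge : ∀ s ∈ Icc t₁ t₂, v₀ ≤ v s := by
    intro s hs
    rcases eq_or_lt_of_le hs.1 with h1 | h1
    · rw [← h1, hvs]
    rcases eq_or_lt_of_le hs.2 with h2 | h2
    · rw [h2, hve]
    · exact (hvgt s ⟨h1, h2⟩).le
  have hGoG : ContinuousOn (fun s => g s / G s) (Ici v₀) :=
    hg.div hG fun u hu => (hGpos u hu).ne'
  have hFint : ∀ s ∈ Icc t₁ t₂, IntervalIntegrable (fun s => g s / G s) volume v₀ (v s) := by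
    intro s hs
    apply ContinuousOn.intervalIntegrable
    apply hGoG.mono
    rw [uIcc_of_le (hvge s hs)]
    exact Icc_subset_Ici_self
  -- key estimate: for t₁ ≤ a ≤ b ≤ t₂, |F (v b) - F (v a)| ≤ w b - w a
  have key : ∀ a ∈ Icc t₁ t₂, ∀ b ∈ Icc t₁ t₂, a ≤ b →
      |F (v b) - F (v a)| ≤ w b - w a := by
    intro a ha b hb hab
    have hsub : Icc a b ⊆ Icc t₁ t₂ := Icc_subset_Icc ha.1 hb.2
    have huicc : uIcc a b = Icc a b := uIcc_of_le hab
    have hvcab : ContinuousOn v (Icc a b) := hvcont.mono hsub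
    have hmaps : v '' uIcc a b ⊆ Ici v₀ := by
      rw [huicc]
      rintro x ⟨y, hy, rfl⟩
      exact hvge y (hsub hy)
    -- change of variables
    have hcov : (∫ x in a..b, v' x • ((fun s => g s / G s) ∘ v) x)
        = ∫ x in v a..v b, g x / G x := by
      apply integral_comp_smul_deriv'
      · intro x hx
        exact hv x (hsub (huicc ▸ hx))
      · rw [huicc]; exact hv'c.mono hsub
      · exact hGoG.mono hmaps
    have hFdiff : F (v b) - F (v a) = ∫ x in v a..v b, g x / G x := by
      rw [hF, hF]
      exact integral_interval_sub_left (hFint b hb) (hFint a ha)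
    -- integrability of the integrand
    have hfc : ContinuousOn (fun x => v' x • ((fun s => g s / G s) ∘ v) x) (Icc a b) := by
      apply ContinuousOn.smul (hv'c.mono hsub)
      exact hGoG.comp hvcab fun x hx => hvge x (hsub hx)
    have hfi : IntervalIntegrable (fun x => v' x • ((fun s => g s / G s) ∘ v) x)
        volume a b := (hfc.mono (by rw [huicc])).intervalIntegrable
    have hw'i : IntervalIntegrable w' volume a b :=
      ((hw'c.mono hsub).mono (by rw [huicc])).intervalIntegrable
    -- a.e. bound
    have hae : ∀ᵐ x ∂(volume.restrict (Icc a b)),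
        |v' x • ((fun s => g s / G s) ∘ v) x| ≤ w' x := by
      have h1 : ∀ᵐ x : ℝ ∂volume, x ≠ t₁ := by
        rw [MeasureTheory.ae_iff]; simp [not_not]
      have h2 : ∀ᵐ x : ℝ ∂volume, x ≠ t₂ := by
        rw [MeasureTheory.ae_iff]; simp [not_not]
      filter_upwards [ae_restrict_mem measurableSet_Icc, ae_restrict_of_ae (h1.and h2)]
        with x hx hne
      have hxIoo : x ∈ Ioo t₁ t₂ :=
        ⟨lt_of_le_of_ne (hsub hx).1 (Ne.symm hne.1), lt_of_le_of_ne (hsub hx).2 hne.2⟩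
      have hvx : v₀ ≤ v x := hvge x (hsub hx)
      have hq : 0 ≤ g (v x) / G (v x) :=
        le_of_lt (div_pos (hgpos _ hvx) (hGpos _ hvx))
      calc |v' x • ((fun s => g s / G s) ∘ v) x|
          = |v' x| * (g (v x) / G (v x)) := by
            simp only [Function.comp, smul_eq_mul, abs_mul, abs_of_nonneg hq]
        _ = g (v x) * |v' x| / G (v x) := by ring
        _ ≤ w' x := hineq x hxIoo
    have habs : |∫ x in a..b, v' x • ((fun s => g s / G s) ∘ v) x|
        ≤ ∫ x in a..b, w' x := by
      refine le_trans (intervalIntegral.abs_integral_le_integral_abs hab) ?_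
      exact integral_mono_ae_restrict hab hfi.abs hw'i hae
    have hwint : (∫ x in a..b, w' x) = w b - w a := by
      apply integral_eq_sub_of_hasDerivAt
      · intro x hx
        exact hw x (hsub (huicc ▸ hx))
      · exact ((hw'c.mono hsub).mono (by rw [huicc])).intervalIntegrable
    rw [hFdiff, ← hcov, ← hwint]
    exact habs
  -- F is strictly monotone on Ici v₀
  have hFmono : ∀ x ∈ Ici v₀, ∀ y ∈ Ici v₀, x < y → F x < F y := by
    intro x hx y hy hxy
    have hint : IntervalIntegrable (fun s => g s / G s) volume x y := by
      apply ContinuousOn.intervalIntegrable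
      apply hGoG.mono
      rw [uIcc_of_le hxy.le]
      exact Icc_subset_Ici_self.trans (Ici_subset_Ici.mpr hx)
    have hxint : IntervalIntegrable (fun s => g s / G s) volume v₀ x := by
      apply ContinuousOn.intervalIntegrable
      apply hGoG.mono
      rw [uIcc_of_le hx]
      exact Icc_subset_Ici_self
    have hpos : 0 < ∫ s in x..y, g s / G s := by
      apply intervalIntegral_pos_of_pos_on hint _ hxy
      intro s hs
      have hs' : v₀ ≤ s := le_trans hx hs.1.le
      exact div_pos (hgpos s hs') (hGpos s hs')
    have : F y - F x = ∫ s in x..y, g s / G s := by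
      rw [hF, hF]
      exact integral_interval_sub_left (hxint.trans hint) hxint
    linarith
  intro t htt
  have hFvt0 : F v₀ = 0 := by rw [hF]; simp
  have h1 : |F (v t) - F (v t₁)| ≤ w t - w t₁ :=
    key t₁ ⟨le_rfl, ht.le⟩ t htt htt.1
  have h2 : |F (v t₂) - F (v t)| ≤ w t₂ - w t :=
    key t htt t₂ ⟨ht.le, le_rfl⟩ htt.2
  rw [hvs, hFvt0] at h1
  rw [hve, hFvt0] at h2
  have hle : F (v t) ≤ (w t₂ - w t₁) / 2 := by
    have a1 : F (v t) ≤ w t - w t₁ := le_trans (le_abs_self _) (by simpa using h1)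
    have a2 : F (v t) ≤ w t₂ - w t := by
      have habs2 : |F (v t)| ≤ w t₂ - w t := by simpa [abs_sub_comm] using h2
      linarith [le_abs_self (F (v t))]
    linarith
  refine ⟨hle, ?_⟩
  intro u hu hFu
  by_contra hlt
  push_neg at hlt
  have : F u < F (v t) := hFmono u hu (v t) (hvge t htt) hlt
  rw [hFu] at this
  linarith
end

section
/- Let u, v : ℝ → ℝ be continuous, b, β : ℝ → (0,∞) continuous, H : [0,∞) → [0,∞) continuous and strictly increasing with H(0)=0, and h : [0,∞) → [0,∞) continuous and nondecreasing. Suppose |u(t)| ≤ b(t)·H(v(t)) for all t, u is differentiable with u'(t) ≥ β(t)·h(v(t)), and there exists t₀ with u(t₀) > 0 and u(t) ≥ u(t₀) for t ≥ t₀. If limsup_{t→∞} (1/b(t))·∫_{t₀}^{t} β(s)·h(H⁻¹(u(t₀)/b(s))) ds = ∞, then limsup_{t→∞} v(t) = ∞. -/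
/-!
For `s ≥ t₀` we have `u t₀ / b s ≤ u s / b s ≤ H (v s)`, hence `H⁻¹ (u t₀ / b s) ≤ v s`, and by the
monotonicity of `h` the integrand `β s * h (H⁻¹ (u t₀ / b s))` is at most `β s * h (v s) ≤ u' s`.
Integrating, `∫_{t₀}^t β s * h (H⁻¹ (u t₀ / b s)) ds ≤ u t - u t₀ ≤ b t * H (v t)`, so `H (v t)`,
and with it `v t`, is large whenever the left side divided by `b t` is.
-/

open Set Filter

namespace intervalIntegral

/-- When `φ` is not interval integrable the integral is `0`; `f a ≤ f b` handles that case. -/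
theorem integral_le_sub_of_le_deriv {f φ : ℝ → ℝ} {a b : ℝ} (hab : a ≤ b)
    (hcont : ContinuousOn f (Icc a b)) (hderiv : ∀ x ∈ Ioo a b, DifferentiableAt ℝ f x)
    (hφ : ∀ x ∈ Ioo a b, φ x ≤ deriv f x) (hfab : f a ≤ f b) :
    ∫ x in a..b, φ x ≤ f b - f a := by
  by_cases hint : IntervalIntegrable φ MeasureTheory.volume a b
  · exact integral_le_sub_of_hasDeriv_right_of_le hab hcont
      (fun x hx => (hderiv x hx).hasDerivAt.hasDerivWithinAt)
      ((intervalIntegrable_iff_integrableOn_Icc_of_le hab).1 hint) hφ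
  · rw [integral_undef hint]
    linarith

end intervalIntegral

theorem stmt_6_general (u v b β H Hinv h : ℝ → ℝ)
    (hu : Differentiable ℝ u) (hvnonneg : ∀ t, 0 ≤ v t)
    (hbpos : ∀ t, 0 < b t)
    (hβpos : ∀ t, 0 < β t)
    (hHmono : StrictMonoOn H (Ici 0))
    (hHinv : ∀ y ∈ Ici (0:ℝ), Hinv y ∈ Ici (0:ℝ) ∧ H (Hinv y) = y)
    (hhmono : MonotoneOn h (Ici 0))
    (hub : ∀ t, |u t| ≤ b t * H (v t))
    (hud : ∀ t, β t * h (v t) ≤ deriv u t)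
    (t₀ : ℝ) (hu₀ : 0 < u t₀) (hge : ∀ t ≥ t₀, u t₀ ≤ u t)
    (hlimsup : ∀ M : ℝ, ∃ᶠ t in atTop,
      M < (1 / b t) * ∫ s in t₀..t, β s * h (Hinv (u t₀ / b s))) :
    ∀ M : ℝ, ∃ᶠ t in atTop, M < v t := by
  have hu_le : ∀ t, u t ≤ b t * H (v t) := fun t => (le_abs_self _).trans (hub t)
  have hintegrand : ∀ s ≥ t₀, β s * h (Hinv (u t₀ / b s)) ≤ deriv u s := by
    intro s hs
    obtain ⟨hHinv_nonneg, hHHinv⟩ := hHinv _ (div_pos hu₀ (hbpos s)).le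
    have hHinv_le : Hinv (u t₀ / b s) ≤ v s := by
      rw [← hHmono.le_iff_le hHinv_nonneg (hvnonneg s), hHHinv, div_le_iff₀' (hbpos s)]
      exact (hge s hs).trans (hu_le s)
    exact (mul_le_mul_of_nonneg_left (hhmono hHinv_nonneg (hvnonneg s) hHinv_le)
      (hβpos s).le).trans (hud s)
  intro M
  refine ((hlimsup (H (max M 0))).and_eventually (eventually_ge_atTop t₀)).mono ?_
  rintro t ⟨hlt, ht⟩
  have hintegral : ∫ s in t₀..t, β s * h (Hinv (u t₀ / b s)) ≤ u t - u t₀ :=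
    intervalIntegral.integral_le_sub_of_le_deriv ht hu.continuous.continuousOn
      (fun x _ => hu x) (fun x hx => hintegrand x hx.1.le) (hge t ht)
  have hH_lt : H (max M 0) < H (v t) := by
    refine hlt.trans_le ?_
    rw [one_div, inv_mul_le_iff₀ (hbpos t)]
    linarith [hu_le t]
  exact (le_max_left M 0).trans_lt ((hHmono.lt_iff_lt (le_max_right M 0) (hvnonneg t)).1 hH_lt)

theorem stmt_6 (u v b β H Hinv h : ℝ → ℝ)
    (hu : Differentiable ℝ u) (hvcont : Continuous v) (hvnonneg : ∀ t, 0 ≤ v t)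
    (hb : Continuous b) (hbpos : ∀ t, 0 < b t)
    (hβ : Continuous β) (hβpos : ∀ t, 0 < β t)
    (hHcont : ContinuousOn H (Ici 0)) (hHmono : StrictMonoOn H (Ici 0))
    (hH0 : H 0 = 0) (hHnonneg : ∀ y ∈ Ici 0, H y ∈ Ici (0:ℝ))
    (hHinv : ∀ y ∈ Ici (0:ℝ), Hinv y ∈ Ici (0:ℝ) ∧ H (Hinv y) = y)
    (hHinv' : ∀ x ∈ Ici (0:ℝ), Hinv (H x) = x)
    (hhcont : ContinuousOn h (Ici 0)) (hhmono : MonotoneOn h (Ici 0))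
    (hhnonneg : ∀ s ∈ Ici (0:ℝ), 0 ≤ h s) (hhpos : ∀ s > (0:ℝ), 0 < h s)
    (hub : ∀ t, |u t| ≤ b t * H (v t))
    (hud : ∀ t, β t * h (v t) ≤ deriv u t)
    (t₀ : ℝ) (hu₀ : 0 < u t₀) (hge : ∀ t ≥ t₀, u t₀ ≤ u t)
    (hlimsup : ∀ M : ℝ, ∃ᶠ t in atTop,
      M < (1 / b t) * ∫ s in t₀..t, β s * h (Hinv (u t₀ / b s))) :
    ∀ M : ℝ, ∃ᶠ t in atTop, M < v t :=
  stmt_6_general u v b β H Hinv h hu hvnonneg hbpos hβpos hHmono hHinv hhmono hub hud t₀ hu₀ hge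
    hlimsup
end

section
/- Let C be a symmetric nondegenerate n×n real matrix with orthogonal invariant decomposition ℝⁿ = L₊ ⊕ L₋ where C|_{L₊} is positive definite and C|_{L₋} is negative definite, and let P₊ be the orthogonal projection onto L₊. For c > 0, the map x ↦ √(c/⟨C P₊ x, P₊ x⟩) · P₊ x is a well-defined continuous retraction of the level set N = {x ∈ ℝⁿ : ⟨Cx, x⟩ = c} onto N ∩ L₊; in particular, for every x ∈ N one has ⟨C P₊ x, P₊ x⟩ > 0. -/
open Set
open scoped RealInnerProductSpace

/-!
Since `L₊` and `L₋` are orthogonal and `C`-invariant, the quadratic form splits as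
`⟪C x, x⟫ = ⟪C x₊, x₊⟫ + ⟪C x₋, x₋⟫` with `x₊ = P₊ x`, `x₋ = x - P₊ x`. The second term is
nonpositive, so on `N` the first is at least `c > 0`; hence the rescaling of `P₊ x` onto `N` is
well defined and continuous, and it fixes the points of `N ∩ L₊`, where `P₊ x = x`.
-/

section QuadraticSplitting

variable {E : Type*} [NormedAddCommGroup E] [InnerProductSpace ℝ E]
  {C P : E →ₗ[ℝ] E} {Lp Lm : Submodule ℝ E}

theorem inner_map_add_self_of_orthogonal_invariant
    (horth : ∀ x ∈ Lp, ∀ y ∈ Lm, ⟪x, y⟫ = 0)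
    (hinvp : ∀ x ∈ Lp, C x ∈ Lp) (hinvm : ∀ x ∈ Lm, C x ∈ Lm)
    {u v : E} (hu : u ∈ Lp) (hv : v ∈ Lm) :
    ⟪C (u + v), u + v⟫ = ⟪C u, u⟫ + ⟪C v, v⟫ := by
  have huv : ⟪C u, v⟫ = 0 := horth _ (hinvp u hu) v hv
  have hvu : ⟪C v, u⟫ = 0 := by rw [real_inner_comm]; exact horth u hu _ (hinvm v hv)
  rw [map_add, inner_add_left, inner_add_right, inner_add_right, huv, hvu]
  ring

theorem inner_map_self_le_inner_map_proj
    (horth : ∀ x ∈ Lp, ∀ y ∈ Lm, ⟪x, y⟫ = 0)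
    (hinvp : ∀ x ∈ Lp, C x ∈ Lp) (hinvm : ∀ x ∈ Lm, C x ∈ Lm)
    (hnonpos : ∀ y ∈ Lm, ⟪C y, y⟫ ≤ 0)
    (hP : ∀ x, P x ∈ Lp ∧ x - P x ∈ Lm) (x : E) :
    ⟪C x, x⟫ ≤ ⟪C (P x), P x⟫ := by
  obtain ⟨hp, hm⟩ := hP x
  have hsplit := inner_map_add_self_of_orthogonal_invariant horth hinvp hinvm hp hm
  rw [add_sub_cancel] at hsplit
  linarith [hnonpos _ hm]

theorem proj_eq_self_of_mem (horth : ∀ x ∈ Lp, ∀ y ∈ Lm, ⟪x, y⟫ = 0)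
    (hP : ∀ x, P x ∈ Lp ∧ x - P x ∈ Lm) {x : E} (hx : x ∈ Lp) : P x = x := by
  have hLp : x - P x ∈ Lp := Lp.sub_mem hx (hP x).1
  have hzero : x - P x = 0 := inner_self_eq_zero.mp (horth _ hLp _ (hP x).2)
  exact (sub_eq_zero.mp hzero).symm

end QuadraticSplitting

theorem inner_map_sqrt_div_smul_self {E : Type*} [NormedAddCommGroup E]
    [InnerProductSpace ℝ E] (C : E →ₗ[ℝ] E) {c : ℝ} (hc : 0 ≤ c) {y : E}
    (hy : 0 < ⟪C y, y⟫) :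
    ⟪C (√(c / ⟪C y, y⟫) • y), √(c / ⟪C y, y⟫) • y⟫ = c := by
  rw [map_smul, real_inner_smul_left, real_inner_smul_right, ← mul_assoc,
    Real.mul_self_sqrt (div_nonneg hc hy.le), div_mul_cancel₀ _ hy.ne']

theorem stmt_8_general (n : ℕ)
    (C Pp : EuclideanSpace ℝ (Fin n) →ₗ[ℝ] EuclideanSpace ℝ (Fin n))
    (Lp Lm : Submodule ℝ (EuclideanSpace ℝ (Fin n)))
    (horth : ∀ x ∈ Lp, ∀ y ∈ Lm, ⟪x, y⟫ = 0)
    (hinvp : ∀ x ∈ Lp, C x ∈ Lp) (hinvm : ∀ x ∈ Lm, C x ∈ Lm)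
    (hneg : ∀ x ∈ Lm, x ≠ 0 → ⟪C x, x⟫ < 0)
    (hPp : ∀ x, Pp x ∈ Lp ∧ x - Pp x ∈ Lm)
    (c : ℝ) (hc : 0 < c)
    (N : Set (EuclideanSpace ℝ (Fin n))) (hN : N = {x | ⟪C x, x⟫ = c})
    (r : EuclideanSpace ℝ (Fin n) → EuclideanSpace ℝ (Fin n))
    (hr : ∀ x, r x = Real.sqrt (c / ⟪C (Pp x), Pp x⟫) • Pp x) :
    (∀ x ∈ N, 0 < ⟪C (Pp x), Pp x⟫) ∧
    ContinuousOn r N ∧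
    (∀ x ∈ N, r x ∈ N ∩ ↑Lp) ∧
    (∀ x ∈ N ∩ ↑Lp, r x = x) := by
  subst hN
  have hnonpos : ∀ y ∈ Lm, ⟪C y, y⟫ ≤ 0 := fun y hy => by
    rcases eq_or_ne y 0 with rfl | hy0
    · simp
    · exact (hneg y hy hy0).le
  have hposN : ∀ x, ⟪C x, x⟫ = c → 0 < ⟪C (Pp x), Pp x⟫ := fun x hx =>
    hc.trans_le (hx ▸ inner_map_self_le_inner_map_proj horth hinvp hinvm hnonpos hPp x)
  refine ⟨hposN, ?_, fun x hx => ?_, fun x ⟨hxN, hxLp⟩ => ?_⟩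
  · have hPc : Continuous Pp := Pp.continuous_of_finiteDimensional
    have hq : Continuous fun x => ⟪C (Pp x), Pp x⟫ :=
      (C.continuous_of_finiteDimensional.comp hPc).inner hPc
    refine ContinuousOn.congr ?_ fun x _ => hr x
    exact (Real.continuous_sqrt.comp_continuousOn
      (continuousOn_const.div hq.continuousOn fun x hx => (hposN x hx).ne')).smul
      hPc.continuousOn
  · rw [hr]
    exact ⟨inner_map_sqrt_div_smul_self C hc.le (hposN x hx), Lp.smul_mem _ (hPp x).1⟩
  · rw [hr, proj_eq_self_of_mem horth hPp hxLp, (hxN : ⟪C x, x⟫ = c), div_self hc.ne',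
      Real.sqrt_one, one_smul]

theorem stmt_8 (n : ℕ)
    (C Pp : EuclideanSpace ℝ (Fin n) →ₗ[ℝ] EuclideanSpace ℝ (Fin n))
    (Lp Lm : Submodule ℝ (EuclideanSpace ℝ (Fin n)))
    (hCsym : ∀ x y, ⟪C x, y⟫ = ⟪x, C y⟫)
    (hCinj : Function.Injective C)
    (horth : ∀ x ∈ Lp, ∀ y ∈ Lm, ⟪x, y⟫ = 0)
    (hspan : Lp ⊔ Lm = ⊤)
    (hinvp : ∀ x ∈ Lp, C x ∈ Lp) (hinvm : ∀ x ∈ Lm, C x ∈ Lm)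
    (hpos : ∀ x ∈ Lp, x ≠ 0 → 0 < ⟪C x, x⟫)
    (hneg : ∀ x ∈ Lm, x ≠ 0 → ⟪C x, x⟫ < 0)
    (hPp : ∀ x, Pp x ∈ Lp ∧ x - Pp x ∈ Lm)
    (c : ℝ) (hc : 0 < c)
    (N : Set (EuclideanSpace ℝ (Fin n))) (hN : N = {x | ⟪C x, x⟫ = c})
    (r : EuclideanSpace ℝ (Fin n) → EuclideanSpace ℝ (Fin n))
    (hr : ∀ x, r x = Real.sqrt (c / ⟪C (Pp x), Pp x⟫) • Pp x) :
    (∀ x ∈ N, 0 < ⟪C (Pp x), Pp x⟫) ∧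
    ContinuousOn r N ∧
    (∀ x ∈ N, r x ∈ N ∩ ↑Lp) ∧
    (∀ x ∈ N ∩ ↑Lp, r x = x) :=
  stmt_8_general n C Pp Lp Lm horth hinvp hinvm hneg hPp c hc N hN r hr
end

section
/- Let v_0 > 0, c₁ > 0, c₂ with c₂² < v_0, c₃ > 0 and 0 < σ < 1. Define F(v) = (1/c₃)·∫_{v_0}^{v} (u − c₂√u)/(u^σ (u + c₁√u)) du for v ≥ v_0. Then for all v ≥ v_0, F(v) ≥ F₁(v), where F₁(v) = [√v_0 / ((1−σ)(√v_0 + c₁) c₃)]·[v^{1−σ} − 2 c₂^{1−σ} v^{(1−σ)/2} − v_0^{1−σ} + 2 c₂^{1−σ} v_0^{(1−σ)/2}]. -/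
open Real intervalIntegral

theorem stmt_14 (v₀ c₁ c₂ c₃ σ : ℝ)
    (hv₀ : 0 < v₀) (hc₁ : 0 < c₁) (hc₂ : 0 < c₂) (hc₂v : c₂ ^ 2 < v₀)
    (hc₃ : 0 < c₃) (hσ : 0 < σ) (hσ1 : σ < 1)
    (F F₁ : ℝ → ℝ)
    (hF : ∀ v, F v = (1 / c₃) * ∫ u in v₀..v,
      (u - c₂ * Real.sqrt u) / (u ^ σ * (u + c₁ * Real.sqrt u)))
    (hF₁ : ∀ v, F₁ v = (Real.sqrt v₀ / ((1 - σ) * (Real.sqrt v₀ + c₁) * c₃)) *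
      (v ^ (1 - σ) - 2 * c₂ ^ (1 - σ) * v ^ ((1 - σ) / 2)
        - v₀ ^ (1 - σ) + 2 * c₂ ^ (1 - σ) * v₀ ^ ((1 - σ) / 2))) :
    ∀ v ≥ v₀, F₁ v ≤ F v := by
  intro v hv
  rw [hF, hF₁]
  have hsv₀ : 0 < Real.sqrt v₀ := Real.sqrt_pos.mpr hv₀
  have hc₂lt : c₂ < Real.sqrt v₀ := by
    have h := Real.sqrt_lt_sqrt (by positivity) hc₂v
    rwa [Real.sqrt_sq hc₂.le] at h
  set K := Real.sqrt v₀ / (Real.sqrt v₀ + c₁) with hKdef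
  have hKpos : 0 < K := by positivity
  set h : ℝ → ℝ := fun u => K * (u ^ (-σ) - c₂ ^ (1 - σ) * u ^ (-(1 + σ) / 2)) with hhdef
  set g : ℝ → ℝ := fun u => (u - c₂ * Real.sqrt u) / (u ^ σ * (u + c₁ * Real.sqrt u)) with hgdef
  -- pointwise comparison
  have key : ∀ u ∈ Set.Icc v₀ v, h u ≤ g u := by
    intro u hu
    obtain ⟨hu1, _⟩ := hu
    have hu0 : 0 < u := lt_of_lt_of_le hv₀ hu1
    set s := Real.sqrt u with hsdef
    have hs0 : 0 < s := Real.sqrt_pos.mpr hu0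
    have hsv : Real.sqrt v₀ ≤ s := Real.sqrt_le_sqrt hu1
    have hc₂s : c₂ < s := lt_of_lt_of_le hc₂lt hsv
    have hA : 0 < u ^ σ := Real.rpow_pos_of_pos hu0 σ
    have husq : s * s = u := Real.mul_self_sqrt hu0.le
    have hg : g u = (s - c₂) / (u ^ σ * (s + c₁)) := by
      have h1 : u - c₂ * s = s * (s - c₂) := by rw [← husq]; ring
      have h2 : u + c₁ * s = s * (s + c₁) := by rw [← husq]; ring
      show (u - c₂ * s) / (u ^ σ * (u + c₁ * s)) = _
      rw [h1, h2, mul_comm (u ^ σ) (s * (s + c₁)), mul_assoc,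
        mul_div_mul_left _ _ (ne_of_gt hs0), mul_comm (s + c₁) (u ^ σ)]
    set t := c₂ / s with htdef
    have ht0 : 0 < t := by positivity
    have ht1 : t < 1 := (div_lt_one hs0).mpr hc₂s
    have hseq : s = u ^ ((1:ℝ)/2) := by rw [hsdef, Real.sqrt_eq_rpow]
    have hh : h u = K * ((1 - t ^ (1 - σ)) / u ^ σ) := by
      have e1 : u ^ (-(1 + σ) / 2) = u ^ (-σ) * u ^ ((σ - 1) / 2) := by
        rw [← Real.rpow_add hu0]; ring_nf
      have e2 : c₂ ^ (1 - σ) * u ^ ((σ - 1) / 2) = t ^ (1 - σ) := by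
        rw [htdef, Real.div_rpow hc₂.le hs0.le, hseq, ← Real.rpow_mul hu0.le]
        rw [show (1:ℝ)/2 * (1 - σ) = -((σ - 1)/2) by ring, Real.rpow_neg hu0.le]
        field_simp
      have e3 : u ^ (-σ) = (u ^ σ)⁻¹ := by rw [Real.rpow_neg hu0.le]
      show K * (u ^ (-σ) - c₂ ^ (1 - σ) * u ^ (-(1 + σ) / 2)) = _
      rw [e1, e3]
      linear_combination (-(K * (u ^ σ)⁻¹)) * e2
    rw [hg, hh]
    have hts : t ≤ t ^ (1 - σ) := by
      have := Real.rpow_le_rpow_of_exponent_ge ht0 ht1.le (by linarith : 1 - σ ≤ 1)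
      rwa [Real.rpow_one] at this
    have htle1 : t ^ (1 - σ) ≤ 1 := Real.rpow_le_one ht0.le ht1.le (by linarith)
    have hKle : K ≤ s / (s + c₁) := by
      rw [hKdef, div_le_div_iff₀ (by positivity) (by positivity)]
      nlinarith
    have key2 : K * (1 - t ^ (1 - σ)) ≤ (s - c₂) / (s + c₁) := by
      have h1 : K * (1 - t ^ (1 - σ)) ≤ (s / (s + c₁)) * (1 - t) := by
        apply mul_le_mul hKle (by linarith) (by linarith) (by positivity)
      have h2 : (s / (s + c₁)) * (1 - t) = (s - c₂) / (s + c₁) := by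
        rw [htdef]; field_simp
      linarith [h1, h2 ▸ h1]
    calc K * ((1 - t ^ (1 - σ)) / u ^ σ) = (K * (1 - t ^ (1 - σ))) / u ^ σ := by ring
      _ ≤ ((s - c₂) / (s + c₁)) / u ^ σ := by
          exact div_le_div_of_nonneg_right key2 hA.le
      _ = (s - c₂) / (u ^ σ * (s + c₁)) := by
          rw [div_div, mul_comm (s + c₁) (u ^ σ)]
  -- integrability of h
  have hσ' : (-1 : ℝ) < -σ := by linarith
  have hσ'' : (-1 : ℝ) < -(1 + σ) / 2 := by linarith
  have hint1 : IntervalIntegrable (fun u : ℝ => u ^ (-σ)) MeasureTheory.volume v₀ v :=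
    intervalIntegral.intervalIntegrable_rpow' hσ'
  have hint2 : IntervalIntegrable (fun u : ℝ => u ^ (-(1 + σ) / 2)) MeasureTheory.volume v₀ v :=
    intervalIntegral.intervalIntegrable_rpow' hσ''
  have hinth : IntervalIntegrable h MeasureTheory.volume v₀ v := by
    rw [hhdef]
    exact ((hint1.sub (hint2.const_mul _)).const_mul K)
  -- integrability of g
  have hintg : IntervalIntegrable g MeasureTheory.volume v₀ v := by
    apply ContinuousOn.intervalIntegrable
    rw [Set.uIcc_of_le hv]
    apply ContinuousOn.div
    · exact (continuous_id.sub (continuous_const.mul Real.continuous_sqrt)).continuousOn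
    · apply ContinuousOn.mul
      · intro x hx
        have hx0 : (0:ℝ) < x := lt_of_lt_of_le hv₀ hx.1
        exact (Real.continuousAt_rpow_const x σ (Or.inl hx0.ne')).continuousWithinAt
      · exact (continuous_id.add (continuous_const.mul Real.continuous_sqrt)).continuousOn
    · intro x hx
      have hx0 : (0:ℝ) < x := lt_of_lt_of_le hv₀ hx.1
      have : 0 < x ^ σ * (x + c₁ * Real.sqrt x) := by
        have : 0 ≤ Real.sqrt x := Real.sqrt_nonneg x
        positivity
      exact this.ne'
  have hmono : (∫ u in v₀..v, h u) ≤ ∫ u in v₀..v, g u :=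
    intervalIntegral.integral_mono_on hv hinth hintg key
  -- compute integral of h
  have hI1 : (∫ u in v₀..v, u ^ (-σ)) = (v ^ (1 - σ) - v₀ ^ (1 - σ)) / (1 - σ) := by
    rw [integral_rpow (Or.inl hσ'), show -σ + 1 = 1 - σ by ring]
  have hI2 : (∫ u in v₀..v, u ^ (-(1 + σ) / 2)) = (v ^ ((1 - σ)/2) - v₀ ^ ((1 - σ)/2)) / ((1 - σ)/2) := by
    rw [integral_rpow (Or.inl hσ''), show -(1 + σ) / 2 + 1 = (1 - σ) / 2 by ring]
  have hcalc : (∫ u in v₀..v, h u)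
      = K * ((v ^ (1 - σ) - v₀ ^ (1 - σ)) / (1 - σ)
        - c₂ ^ (1 - σ) * ((v ^ ((1 - σ)/2) - v₀ ^ ((1 - σ)/2)) / ((1 - σ)/2))) := by
    rw [hhdef]
    rw [intervalIntegral.integral_const_mul,
      intervalIntegral.integral_sub hint1 (hint2.const_mul _),
      intervalIntegral.integral_const_mul, hI1, hI2]
  have hσne : (1 - σ) ≠ 0 := by linarith
  have hfin : (Real.sqrt v₀ / ((1 - σ) * (Real.sqrt v₀ + c₁) * c₃)) *
      (v ^ (1 - σ) - 2 * c₂ ^ (1 - σ) * v ^ ((1 - σ) / 2)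
        - v₀ ^ (1 - σ) + 2 * c₂ ^ (1 - σ) * v₀ ^ ((1 - σ) / 2))
      = (1 / c₃) * ∫ u in v₀..v, h u := by
    rw [hcalc, hKdef]
    field_simp
    ring
  rw [hfin]
  apply mul_le_mul_of_nonneg_left hmono (by positivity)
end

section
/- Let v_0 > 0, c₁ > 0, 0 < c₂ < √v_0, c₃ > 0 and σ = 1. Define F(v) = (1/c₃)·∫_{v_0}^{v} (u − c₂√u)/(u(u + c₁√u)) du. Then for all v ≥ v_0, F(v) ≥ [√v_0/((√v_0 + c₁)c₃)]·[ln v − ln v_0 + 2c₂ v^{−1/2} − 2c₂ v_0^{−1/2}], and consequently F(v) ≥ F₁(v) := [√v_0/((√v_0 + c₁)c₃)]·[ln v − ln v_0 − 2c₂ v_0^{−1/2}]. -/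
/-!
Writing `s = √u`, the integrand is `(s - c₂) / (u s) · s / (s + c₁)`. On `[v₀, v]` the first
factor is nonnegative because `c₂ < √v₀ ≤ s`, and `s / (s + c₁)` is increasing, hence at least
`√v₀ / (√v₀ + c₁)`. So the integrand dominates `√v₀ / (√v₀ + c₁) · (1 / u - c₂ u^{-3/2})`, whose
antiderivative is `√v₀ / (√v₀ + c₁) · (log u + 2 c₂ / √u)`. Dropping `2 c₂ / √v ≥ 0` gives `F₁`.
-/

open Real Set intervalIntegral

lemma hasDerivAt_log_add_div_sqrt (c : ℝ) {u : ℝ} (hu : 0 < u) :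
    HasDerivAt (fun x => log x + 2 * c / √x) (1 / u - c / (u * √u)) u := by
  have hs : 0 < √u := sqrt_pos.2 hu
  have h := (hasDerivAt_log hu.ne').add
    ((hasDerivAt_const u (2 * c)).div (hasDerivAt_sqrt hu.ne') hs.ne')
  refine h.congr_deriv ?_
  rw [sq_sqrt hu.le]; field_simp; ring

lemma continuousOn_inv_sub_div_mul_sqrt (c : ℝ) :
    ContinuousOn (fun u : ℝ => 1 / u - c / (u * √u)) (Ioi 0) := by
  fun_prop (disch := intro x (hx : 0 < x); have := sqrt_pos.2 hx; positivity)

lemma integral_inv_sub_div_mul_sqrt (c : ℝ) {a b : ℝ} (ha : 0 < a) (hb : 0 < b) :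
    ∫ u in a..b, (1 / u - c / (u * √u)) = log b - log a + 2 * c / √b - 2 * c / √a := by
  have hpos : uIcc a b ⊆ Ioi 0 := fun x hx => lt_of_lt_of_le (lt_min ha hb) hx.1
  rw [integral_eq_sub_of_hasDerivAt (fun x hx => hasDerivAt_log_add_div_sqrt c (hpos hx))
    ((continuousOn_inv_sub_div_mul_sqrt c).mono hpos).intervalIntegrable]
  ring

lemma div_add_le_div_add {a b c : ℝ} (ha : 0 < a) (hab : a ≤ b) (hc : 0 ≤ c) :
    a / (a + c) ≤ b / (b + c) := by
  rw [div_le_div_iff₀ (by positivity) (by linarith)]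
  nlinarith

lemma mul_inv_sub_div_mul_sqrt_le {v₀ c₁ c₂ u : ℝ} (hv₀ : 0 < v₀) (hc₁ : 0 ≤ c₁)
    (hc₂ : c₂ ≤ √v₀) (hu : v₀ ≤ u) :
    √v₀ / (√v₀ + c₁) * (1 / u - c₂ / (u * √u)) ≤ (u - c₂ * √u) / (u * (u + c₁ * √u)) := by
  have hu₀ : 0 < u := hv₀.trans_le hu
  have hs₀ : 0 < √v₀ := sqrt_pos.2 hv₀
  have hs : √v₀ ≤ √u := sqrt_le_sqrt hu
  have hsu : 0 < √u := hs₀.trans_le hs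
  have hL : √v₀ / (√v₀ + c₁) * (1 / u - c₂ / (u * √u)) =
      (√u - c₂) / (u * √u) * (√v₀ / (√v₀ + c₁)) := by
    field_simp
  have hR : (u - c₂ * √u) / (u * (u + c₁ * √u)) =
      (√u - c₂) / (u * √u) * (√u / (√u + c₁)) := by
    field_simp
    linear_combination -(c₁ + c₂) * mul_self_sqrt hu₀.le
  rw [hL, hR]
  exact mul_le_mul_of_nonneg_left (div_add_le_div_add hs₀ hs hc₁)
    (div_nonneg (by linarith) (by positivity))

lemma log_bound_le_integral {v₀ c₁ c₂ v : ℝ} (hv₀ : 0 < v₀) (hc₁ : 0 ≤ c₁)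
    (hc₂ : c₂ ≤ √v₀) (hv : v₀ ≤ v) :
    √v₀ / (√v₀ + c₁) * (log v - log v₀ + 2 * c₂ / √v - 2 * c₂ / √v₀) ≤
      ∫ u in v₀..v, (u - c₂ * √u) / (u * (u + c₁ * √u)) := by
  have hpos : uIcc v₀ v ⊆ Ioi 0 := fun x hx => hv₀.trans_le (by simpa [hv] using hx.1)
  rw [← integral_inv_sub_div_mul_sqrt c₂ hv₀ (hv₀.trans_le hv), ← integral_const_mul]
  refine integral_mono_on hv
    (((continuousOn_inv_sub_div_mul_sqrt c₂).mono hpos).intervalIntegrable.const_mul _) ?_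
    fun u hu => mul_inv_sub_div_mul_sqrt_le hv₀ hc₁ hc₂ hu.1
  refine ContinuousOn.intervalIntegrable (ContinuousOn.mono ?_ hpos)
  fun_prop (disch := intro x (hx : 0 < x); have := sqrt_pos.2 hx; positivity)

theorem stmt_15 (v₀ c₁ c₂ c₃ : ℝ)
    (hv₀ : 0 < v₀) (hc₁ : 0 < c₁) (hc₂ : 0 < c₂) (hc₂v : c₂ < Real.sqrt v₀)
    (hc₃ : 0 < c₃)
    (F F₁ : ℝ → ℝ)
    (hF : ∀ v, F v = (1 / c₃) * ∫ u in v₀..v,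
      (u - c₂ * Real.sqrt u) / (u * (u + c₁ * Real.sqrt u)))
    (hF₁ : ∀ v, F₁ v = (Real.sqrt v₀ / ((Real.sqrt v₀ + c₁) * c₃)) *
      (Real.log v - Real.log v₀ - 2 * c₂ / Real.sqrt v₀)) :
    ∀ v ≥ v₀,
      (Real.sqrt v₀ / ((Real.sqrt v₀ + c₁) * c₃)) *
        (Real.log v - Real.log v₀ + 2 * c₂ / Real.sqrt v - 2 * c₂ / Real.sqrt v₀)
        ≤ F v ∧ F₁ v ≤ F v := by
  intro v hv
  have hcoef : √v₀ / ((√v₀ + c₁) * c₃) = 1 / c₃ * (√v₀ / (√v₀ + c₁)) := by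
    rw [div_mul_div_comm, one_mul, mul_comm c₃]
  have hlower : √v₀ / ((√v₀ + c₁) * c₃) *
      (log v - log v₀ + 2 * c₂ / √v - 2 * c₂ / √v₀) ≤ F v := by
    rw [hF, hcoef, mul_assoc]
    exact mul_le_mul_of_nonneg_left (log_bound_le_integral hv₀ hc₁.le hc₂v.le hv)
      (by positivity)
  refine ⟨hlower, le_trans ?_ hlower⟩
  rw [hF₁]
  have : 0 ≤ 2 * c₂ / √v := by positivity
  gcongr
  linarith
end

section
/- Let x : ℝ → ℝⁿ and y : ℝ → ℝⁿ be differentiable, and suppose there exist: symmetric positive definite matrices B(t) depending continuously on t, a C¹ family of symmetric matrices Ĉ(t), a continuous function β̂ : ℝ → (0,∞), and matrices Â(t) with x'(t) − y'(t) = Â(t)(x(t) − y(t)), such that the quadratic form of Ĉ(t)Â(t) + Â(t)*Ĉ(t) + Ĉ'(t) dominates β̂(t)·B(t) (i.e., ⟨(Ĉ(t)Â(t)+Â(t)*Ĉ(t)+Ĉ'(t))z, z⟩ ≥ β̂(t)⟨B(t)z,z⟩ for all z). Then the function u(t) = ⟨Ĉ(t)(x(t)−y(t)), x(t)−y(t)⟩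 is nondecreasing, and moreover u'(t) ≥ β̂(t)·⟨B(t)(x(t)−y(t)), x(t)−y(t)⟩ ≥ 0 for all t. -/
/-!
Write `e = x - y`, so that `e' = Â e`. Differentiating `u = ⟪Ĉ e, e⟫` by the product rule gives
`u' = ⟪Ĉ (Â e), e⟫ + ⟪Ĉ e, Â e⟫ + ⟪Ĉ' e, e⟫`, which by the domination hypothesis is at least
`β̂ ⟪B e, e⟫ ≥ 0`; a function with nonnegative derivative everywhere is monotone.
-/

open scoped RealInnerProductSpace

section LinearMapFamily

variable {𝕜 E F : Type*} [NontriviallyNormedField 𝕜] [CompleteSpace 𝕜]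
  [NormedAddCommGroup E] [NormedSpace 𝕜 E] [FiniteDimensional 𝕜 E]
  [NormedAddCommGroup F] [NormedSpace 𝕜 F]

/-- Only pointwise differentiability of `L` is assumed: expanding `v s` in a basis of the
finite-dimensional `E` reduces the claim to finitely many scalar product rules. -/
theorem HasDerivAt.linearMap_apply {L : 𝕜 → E →ₗ[𝕜] F} {L' : E →ₗ[𝕜] F} {v : 𝕜 → E} {v' : E}
    {t : 𝕜} (hL : ∀ z, HasDerivAt (fun s => L s z) (L' z) t) (hv : HasDerivAt v v' t) :
    HasDerivAt (fun s => L s (v s)) (L t v' + L' (v t)) t := by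
  let b := Module.finBasis 𝕜 E
  have hcoord : ∀ i, HasDerivAt (fun s => b.repr (v s) i) (b.repr v' i) t := fun i =>
    (LinearMap.toContinuousLinearMap (b.coord i)).hasFDerivAt.comp_hasDerivAt t hv
  have hsum := HasDerivAt.fun_sum (u := Finset.univ) fun i _ => (hcoord i).fun_smul (hL (b i))
  have hexpand : ∀ (M : E →ₗ[𝕜] F) (z : E), ∑ i, b.repr z i • M (b i) = M z := fun M z => by
    simp_rw [← map_smul, ← map_sum, b.sum_repr]
  simp only [hexpand, Finset.sum_add_distrib] at hsum
  rwa [add_comm (L' (v t))] at hsum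

end LinearMapFamily

theorem HasDerivAt.inner_linearMap_apply_self {E : Type*} [NormedAddCommGroup E]
    [InnerProductSpace ℝ E] [FiniteDimensional ℝ E] {C : ℝ → E →ₗ[ℝ] E} {C' : E →ₗ[ℝ] E}
    {v : ℝ → E} {v' : E} {t : ℝ} (hC : ∀ z, HasDerivAt (fun s => C s z) (C' z) t)
    (hv : HasDerivAt v v' t) :
    HasDerivAt (fun s => ⟪C s (v s), v s⟫) (⟪C t v', v t⟫ + ⟪C t (v t), v'⟫ + ⟪C' (v t), v t⟫) t := by
  refine ((hv.linearMap_apply hC).inner ℝ hv).congr_deriv ?_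
  rw [inner_add_left]
  ring

theorem stmt_16_general (n : ℕ)
    (x y x' y' : ℝ → EuclideanSpace ℝ (Fin n))
    (hx : ∀ t, HasDerivAt x (x' t) t) (hy : ∀ t, HasDerivAt y (y' t) t)
    (B Ch Ch' A : ℝ → EuclideanSpace ℝ (Fin n) →ₗ[ℝ] EuclideanSpace ℝ (Fin n))
    (hBpos : ∀ t z, z ≠ 0 → 0 < ⟪B t z, z⟫)
    (hChderiv : ∀ t z, HasDerivAt (fun s => Ch s z) (Ch' t z) t)
    (hA : ∀ t, x' t - y' t = A t (x t - y t))
    (β : ℝ → ℝ) (hβpos : ∀ t, 0 < β t)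
    (hdom : ∀ t z, β t * ⟪B t z, z⟫ ≤
      ⟪Ch t (A t z), z⟫ + ⟪Ch t z, A t z⟫ + ⟪Ch' t z, z⟫)
    (u : ℝ → ℝ) (hu : ∀ t, u t = ⟪Ch t (x t - y t), x t - y t⟫) :
    Monotone u ∧ ∀ t, ∃ d : ℝ, HasDerivAt u d t ∧
      β t * ⟪B t (x t - y t), x t - y t⟫ ≤ d ∧
      0 ≤ β t * ⟪B t (x t - y t), x t - y t⟫ := by
  set e := fun t => x t - y t
  have he : ∀ t, HasDerivAt e (A t (e t)) t := fun t => hA t ▸ (hx t).sub (hy t)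
  have hu' : ∀ t, HasDerivAt u
      (⟪Ch t (A t (e t)), e t⟫ + ⟪Ch t (e t), A t (e t)⟫ + ⟪Ch' t (e t), e t⟫) t := fun t => by
    rw [funext hu]
    exact (he t).inner_linearMap_apply_self (hChderiv t)
  have hnonneg : ∀ t, 0 ≤ β t * ⟪B t (e t), e t⟫ := fun t => by
    rcases eq_or_ne (e t) 0 with h | h
    · simp [h]
    · exact (mul_pos (hβpos t) (hBpos t _ h)).le
  refine ⟨monotone_of_hasDerivAt_nonneg hu' fun t => (hnonneg t).trans (hdom t (e t)),
    fun t => ⟨_, hu' t, hdom t (e t), hnonneg t⟩⟩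

theorem stmt_16 (n : ℕ)
    (x y x' y' : ℝ → EuclideanSpace ℝ (Fin n))
    (hx : ∀ t, HasDerivAt x (x' t) t) (hy : ∀ t, HasDerivAt y (y' t) t)
    (B Ch Ch' A : ℝ → EuclideanSpace ℝ (Fin n) →ₗ[ℝ] EuclideanSpace ℝ (Fin n))
    (hBcont : ∀ z, Continuous fun t => B t z)
    (hBsym : ∀ t z w, ⟪B t z, w⟫ = ⟪z, B t w⟫)
    (hBpos : ∀ t z, z ≠ 0 → 0 < ⟪B t z, z⟫)
    (hChsym : ∀ t z w, ⟪Ch t z, w⟫ = ⟪z, Ch t w⟫)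
    (hChderiv : ∀ t z, HasDerivAt (fun s => Ch s z) (Ch' t z) t)
    (hCh'cont : ∀ z, Continuous fun t => Ch' t z)
    (hA : ∀ t, x' t - y' t = A t (x t - y t))
    (β : ℝ → ℝ) (hβ : Continuous β) (hβpos : ∀ t, 0 < β t)
    (hdom : ∀ t z, β t * ⟪B t z, z⟫ ≤
      ⟪Ch t (A t z), z⟫ + ⟪Ch t z, A t z⟫ + ⟪Ch' t z, z⟫)
    (u : ℝ → ℝ) (hu : ∀ t, u t = ⟪Ch t (x t - y t), x t - y t⟫) :
    Monotone u ∧ ∀ t, ∃ d : ℝ, HasDerivAt u d t ∧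
      β t * ⟪B t (x t - y t), x t - y t⟫ ≤ d ∧
      0 ≤ β t * ⟪B t (x t - y t), x t - y t⟫ :=
  stmt_16_general n x y x' y' hx hy B Ch Ch' A hBpos hChderiv hA β hβpos hdom u hu
end

section
/- Let V : ℝ → ℝ be C¹ with |V'(t)| ≤ a(t)·G(V(t)) whenever V(t) ≥ v_0, and let W : ℝ → ℝ be C¹ with W'(t) ≥ a(t)·g(V(t)) whenever V(t) ≥ v_0, where a : ℝ → (0,∞) is continuous and g, G : [v_0, ∞) → (0,∞) are continuous with g(v) ≥ g(v_0) > 0 for v ≥ v_0. If the set J = {t : V(t) > v_0} is nonempty and open with V = v_0 on its boundary, and W is bounded on J, then on every connected component (a, b) of J with a, b finite, sup_{t ∈ (a,b)} F(V(t)) ≤ (W(b) − W(a))/2, where F(v) = ∫_{v_0}^{v} g/G. -/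
/-!
On a component `(a', b')` put `Φ = F ∘ V`. There `V > v₀`, so by the chain rule and the two
differential inequalities `|Φ'| = (g/G)(V) |V'| ≤ a g(V) ≤ W'`; hence `W - Φ` and `W + Φ`
are nondecreasing on `[a', b']`. Since `V = v₀` on the frontier of `J`, `Φ` vanishes at `a'` and
`b'`, so `Φ(t) ≤ W(t) - W(a')` and `Φ(t) ≤ W(b') - W(t)`; adding the two gives the claim.
-/

open Set intervalIntegral

section Comparison

variable {u w u' w' : ℝ → ℝ} {x y : ℝ}

theorem sub_le_sub_of_hasDerivAt_le (hxy : x ≤ y)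
    (hu : ContinuousOn u (Icc x y)) (hw : ContinuousOn w (Icc x y))
    (hu' : ∀ s ∈ Ioo x y, HasDerivAt u (u' s) s)
    (hw' : ∀ s ∈ Ioo x y, HasDerivAt w (w' s) s)
    (hle : ∀ s ∈ Ioo x y, u' s ≤ w' s) :
    u y - u x ≤ w y - w x := by
  have hmono : MonotoneOn (fun s => w s - u s) (Icc x y) := by
    refine monotoneOn_of_hasDerivWithinAt_nonneg (f' := fun s => w' s - u' s)
      (convex_Icc x y) (hw.sub hu) ?_ ?_ <;> rw [interior_Icc]
    · exact fun s hs => ((hw' s hs).sub (hu' s hs)).hasDerivWithinAt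
    · exact fun s hs => sub_nonneg.2 (hle s hs)
  have := hmono (left_mem_Icc.2 hxy) (right_mem_Icc.2 hxy) hxy
  linarith

theorem abs_sub_le_sub_of_hasDerivAt_abs_le (hxy : x ≤ y)
    (hu : ContinuousOn u (Icc x y)) (hw : ContinuousOn w (Icc x y))
    (hu' : ∀ s ∈ Ioo x y, HasDerivAt u (u' s) s)
    (hw' : ∀ s ∈ Ioo x y, HasDerivAt w (w' s) s)
    (hle : ∀ s ∈ Ioo x y, |u' s| ≤ w' s) :
    |u y - u x| ≤ w y - w x := by
  have hup := sub_le_sub_of_hasDerivAt_le hxy hu hw hu' hw'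
    fun s hs => (le_abs_self _).trans (hle s hs)
  have hdown := sub_le_sub_of_hasDerivAt_le hxy hu.neg hw (fun s hs => (hu' s hs).neg) hw'
    fun s hs => (neg_le_abs _).trans (hle s hs)
  exact abs_sub_le_iff.2 ⟨hup, by simp only [Pi.neg_apply] at hdown; linarith⟩

end Comparison

section PrimitiveOnIci

variable {f : ℝ → ℝ} {c : ℝ}

theorem continuousOn_primitive_Ici (hf : ContinuousOn f (Ici c)) :
    ContinuousOn (fun u => ∫ s in c..u, f s) (Ici c) := by
  intro x hx
  have hIcc : uIcc c (x + 1) = Icc c (x + 1) := uIcc_of_le (by linarith [mem_Ici.1 hx])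
  have hint : MeasureTheory.IntegrableOn f (uIcc c (x + 1)) := by
    rw [hIcc]
    exact (hf.mono Icc_subset_Ici_self).integrableOn_compact isCompact_Icc
  refine ((continuousOn_primitive_interval hint) x ?_).mono_of_mem_nhdsWithin ?_
  · rw [hIcc]
    exact ⟨hx, by linarith⟩
  · rw [hIcc, ← Ici_inter_Iic]
    exact inter_mem_nhdsWithin _ (Iic_mem_nhds (by linarith))

theorem hasDerivAt_primitive_of_continuousOn_Ici (hf : ContinuousOn f (Ici c)) {x : ℝ}
    (hx : c < x) : HasDerivAt (fun u => ∫ s in c..u, f s) (f x) x := by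
  have hnhds : Ici c ∈ nhds x := Ici_mem_nhds hx
  refine integral_hasDerivAt_right ?_ ?_ (hf.continuousAt hnhds)
  · exact (hf.mono (by rw [uIcc_of_le hx.le]; exact Icc_subset_Ici_self)).intervalIntegrable
  · exact (hf.mono Ioi_subset_Ici_self).stronglyMeasurableAtFilter isOpen_Ioi _ hx

end PrimitiveOnIci

theorem abs_div_mul_le_of_abs_le {p q d c : ℝ} (hp : 0 < p) (hq : 0 < q) (hd : |d| ≤ c * q) :
    |p / q * d| ≤ c * p := by
  calc |p / q * d| = p / q * |d| := by rw [abs_mul, abs_of_pos (div_pos hp hq)]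
    _ ≤ p / q * (c * q) := by gcongr
    _ = c * p := by field_simp

theorem stmt_17_general (v₀ : ℝ)
    (V W a g G : ℝ → ℝ)
    (hV : ContDiff ℝ 1 V) (hW : ContDiff ℝ 1 W)
    (hg : ContinuousOn g (Ici v₀)) (hG : ContinuousOn G (Ici v₀))
    (hgpos : ∀ u ∈ Ici v₀, 0 < g u) (hGpos : ∀ u ∈ Ici v₀, 0 < G u)
    (hVd : ∀ t, v₀ ≤ V t → |deriv V t| ≤ a t * G (V t))
    (hWd : ∀ t, v₀ ≤ V t → a t * g (V t) ≤ deriv W t)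
    (J : Set ℝ) (hJ : J = {t | v₀ < V t})
    (hfront : ∀ t ∈ frontier J, V t = v₀)
    (F : ℝ → ℝ) (hF : ∀ u, F u = ∫ s in v₀..u, g s / G s) :
    ∀ a' b' : ℝ, a' < b' → Ioo a' b' ⊆ J → a' ∉ J → b' ∉ J →
      ∀ t ∈ Ioo a' b', F (V t) ≤ (W b' - W a') / 2 := by
  intro a' b' hab hsub ha' hb' t ht
  obtain rfl : F = fun u => ∫ s in v₀..u, g s / G s := funext hF
  have hVJ : ∀ s ∈ Ioo a' b', v₀ < V s := fun s hs => by simpa [hJ] using hsub hs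
  have hclosure : Icc a' b' ⊆ closure J := closure_Ioo hab.ne ▸ closure_mono hsub
  have hVge : MapsTo V (Icc a' b') (Ici v₀) := fun s hs =>
    closure_lt_subset_le continuous_const hV.continuous (hJ ▸ hclosure hs)
  have hVend : ∀ x ∈ Icc a' b', x ∉ J → V x = v₀ := fun x hx hxJ =>
    hfront x ⟨hclosure hx, fun h => hxJ (interior_subset h)⟩
  have hVa : V a' = v₀ := hVend a' (left_mem_Icc.2 hab.le) ha'
  have hVb : V b' = v₀ := hVend b' (right_mem_Icc.2 hab.le) hb'
  have hf : ContinuousOn (fun u => g u / G u) (Ici v₀) := hg.div hG fun u hu => (hGpos u hu).ne'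
  have hFV : ContinuousOn (fun s => ∫ u in v₀..V s, g u / G u) (Icc a' b') :=
    (continuousOn_primitive_Ici hf).comp hV.continuous.continuousOn hVge
  have hFV' : ∀ s ∈ Ioo a' b',
      HasDerivAt (fun s => ∫ u in v₀..V s, g u / G u) (g (V s) / G (V s) * deriv V s) s :=
    fun s hs => (hasDerivAt_primitive_of_continuousOn_Ici hf (hVJ s hs)).comp s
      ((hV.differentiable one_ne_zero) s).hasDerivAt
  have hbound : ∀ s ∈ Ioo a' b', |g (V s) / G (V s) * deriv V s| ≤ deriv W s := fun s hs =>
    have hVs : V s ∈ Ici v₀ := hVge (Ioo_subset_Icc_self hs)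
    (abs_div_mul_le_of_abs_le (hgpos _ hVs) (hGpos _ hVs) (hVd s hVs)).trans (hWd s hVs)
  have hcompare : ∀ x ∈ Icc a' b', ∀ y ∈ Icc a' b', x ≤ y →
      |(∫ u in v₀..V y, g u / G u) - ∫ u in v₀..V x, g u / G u| ≤ W y - W x :=
    fun x hx y hy hxy => abs_sub_le_sub_of_hasDerivAt_abs_le hxy
      (hFV.mono (Icc_subset_Icc hx.1 hy.2)) hW.continuous.continuousOn
      (fun s hs => hFV' s ⟨hx.1.trans_lt hs.1, hs.2.trans_le hy.2⟩)
      (fun s _ => ((hW.differentiable one_ne_zero) s).hasDerivAt)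
      (fun s hs => hbound s ⟨hx.1.trans_lt hs.1, hs.2.trans_le hy.2⟩)
  have hleft := hcompare a' (left_mem_Icc.2 hab.le) t (Ioo_subset_Icc_self ht) ht.1.le
  have hright := hcompare t (Ioo_subset_Icc_self ht) b' (right_mem_Icc.2 hab.le) ht.2.le
  simp only [hVa, hVb, integral_same, sub_zero, zero_sub, abs_neg] at hleft hright
  linarith [le_abs_self (∫ u in v₀..V t, g u / G u)]

theorem stmt_17 (v₀ : ℝ) (hv₀ : 0 < v₀)
    (V W a g G : ℝ → ℝ)
    (hV : ContDiff ℝ 1 V) (hW : ContDiff ℝ 1 W)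
    (ha : Continuous a) (hapos : ∀ t, 0 < a t)
    (hg : ContinuousOn g (Ici v₀)) (hG : ContinuousOn G (Ici v₀))
    (hgpos : ∀ u ∈ Ici v₀, 0 < g u) (hGpos : ∀ u ∈ Ici v₀, 0 < G u)
    (hglb : 0 < g v₀) (hgge : ∀ u ∈ Ici v₀, g v₀ ≤ g u)
    (hVd : ∀ t, v₀ ≤ V t → |deriv V t| ≤ a t * G (V t))
    (hWd : ∀ t, v₀ ≤ V t → a t * g (V t) ≤ deriv W t)
    (J : Set ℝ) (hJ : J = {t | v₀ < V t}) (hJne : J.Nonempty)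
    (hfront : ∀ t ∈ frontier J, V t = v₀)
    (hWbdd : ∃ M : ℝ, ∀ t ∈ J, |W t| ≤ M)
    (F : ℝ → ℝ) (hF : ∀ u, F u = ∫ s in v₀..u, g s / G s) :
    ∀ a' b' : ℝ, a' < b' → Ioo a' b' ⊆ J → a' ∉ J → b' ∉ J →
      ∀ t ∈ Ioo a' b', F (V t) ≤ (W b' - W a') / 2 :=
  stmt_17_general v₀ V W a g G hV hW hg hG hgpos hGpos hVd hWd J hJ hfront F hF
end
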